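/- arXiv:2311.07356 — 2 statements merged into one kernel-verified Lean document; each statement's English description precedes it below -/
import Mathlib

section
/- Let l, l_1, l_2 ∈ ℝ[x,y]_1 be linear forms with l nonzero and l_1, l_2 linearly independent. Then the set l⁴·cone(l_1⁴, l_2⁴) = {l⁴·(c_1·l_1⁴ + c_2·l_2⁴) : c_1, c_2 ∈ ℝ, c_1 ≥ 0, c_2 ≥ 0} is a face of the cone Σ_{2,8}^4: whenever f and g are binary octics, each a finite sum of fourth powers of binary quadratic forms, and f + g belongs to this set, then both f and g belong to it. -/
open MvPolynomial

/- ## Auxiliary lemmas -/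

private lemma fin2_ext_iff' (d e : Fin 2 →₀ ℕ) : d = e ↔ d 0 = e 0 ∧ d 1 = e 1 := by
  constructor
  · rintro rfl; exact ⟨rfl, rfl⟩
  · rintro ⟨h1, h2⟩; ext x; fin_cases x; exacts [h1, h2]

private lemma fin2_degree' (d : Fin 2 →₀ ℕ) : d.degree = d 0 + d 1 := by
  rw [Finsupp.degree_apply, Finset.sum_subset (Finset.subset_univ d.support)]
  · exact Fin.sum_univ_two d
  · intro i _ h; simpa using Finsupp.notMem_support_iff.mp h

private lemma hom1_repr' {u : MvPolynomial (Fin 2) ℝ} (hu : u.IsHomogeneous 1) :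
    u = C (coeff (Finsupp.single 0 1) u) * X 0 + C (coeff (Finsupp.single 1 1) u) * X 1 := by
  apply MvPolynomial.ext; intro d
  rw [coeff_add, coeff_C_mul, coeff_C_mul, coeff_X', coeff_X']
  by_cases hd : d 0 + d 1 = 1
  · rcases Nat.le_one_iff_eq_zero_or_eq_one.mp (le_trans (Nat.le_add_right _ _) hd.le) with h0 | h0
    · have h1 : d 1 = 1 := by omega
      have hde : d = Finsupp.single 1 1 := by
        rw [fin2_ext_iff']; simp [h0, h1]
      rw [if_pos hde.symm, if_neg (by rw [fin2_ext_iff']; simp [Finsupp.single_apply]; omega), hde]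
      ring
    · have h1 : d 1 = 0 := by omega
      have hde : d = Finsupp.single 0 1 := by
        rw [fin2_ext_iff']; simp [h0, h1]
      rw [if_pos hde.symm, if_neg (by rw [fin2_ext_iff']; simp [Finsupp.single_apply]; omega), hde]
      ring
  · rw [hu.coeff_eq_zero (by rw [fin2_degree']; exact hd)]
    rw [if_neg (by rw [fin2_ext_iff']; simp [Finsupp.single_apply]; omega),
      if_neg (by rw [fin2_ext_iff']; simp [Finsupp.single_apply]; omega)]
    ring

private lemma X0X1_eq' : (X 0 * X 1 : MvPolynomial (Fin 2) ℝ)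
    = monomial (Finsupp.single 0 1 + Finsupp.single 1 1) 1 := by
  rw [X, X, monomial_mul, one_mul]

private lemma hom2_repr' {u : MvPolynomial (Fin 2) ℝ} (hu : u.IsHomogeneous 2) :
    u = C (coeff (Finsupp.single 0 2) u) * X 0 ^ 2
      + C (coeff (Finsupp.single 0 1 + Finsupp.single 1 1) u) * (X 0 * X 1)
      + C (coeff (Finsupp.single 1 2) u) * X 1 ^ 2 := by
  apply MvPolynomial.ext; intro d
  rw [coeff_add, coeff_add, coeff_C_mul, coeff_C_mul, coeff_C_mul,
    X0X1_eq', X_pow_eq_monomial, X_pow_eq_monomial, coeff_monomial, coeff_monomial,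
    coeff_monomial]
  by_cases hd : d 0 + d 1 = 2
  · have hd0 : d 0 ≤ 2 := by omega
    interval_cases h0 : d 0
    · have h1 : d 1 = 2 := by omega
      have hde : Finsupp.single (1:Fin 2) 2 = d := by
        rw [eq_comm, fin2_ext_iff']; simp [h0, h1, Finsupp.single_apply]
      rw [if_pos hde, if_neg (by rw [eq_comm, fin2_ext_iff']; simp [Finsupp.single_apply]; omega),
        if_neg (by rw [eq_comm, fin2_ext_iff']; simp [Finsupp.single_apply]; omega), ← hde]
      ring
    · have h1 : d 1 = 1 := by omega
      have hde : (Finsupp.single (0:Fin 2) 1 + Finsupp.single 1 1) = d := by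
        rw [eq_comm, fin2_ext_iff']; simp [h0, h1, Finsupp.single_apply]
      rw [if_pos hde, if_neg (by rw [eq_comm, fin2_ext_iff']; simp [Finsupp.single_apply]; omega),
        if_neg (by rw [eq_comm, fin2_ext_iff']; simp [Finsupp.single_apply]; omega), ← hde]
      ring
    · have h1 : d 1 = 0 := by omega
      have hde : Finsupp.single (0:Fin 2) 2 = d := by
        rw [eq_comm, fin2_ext_iff']; simp [h0, h1, Finsupp.single_apply]
      rw [if_pos hde, if_neg (by rw [eq_comm, fin2_ext_iff']; simp [Finsupp.single_apply]; omega),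
        if_neg (by rw [eq_comm, fin2_ext_iff']; simp [Finsupp.single_apply]; omega), ← hde]
      ring
  · rw [hu.coeff_eq_zero (by rw [fin2_degree']; exact hd)]
    rw [if_neg (by rw [eq_comm, fin2_ext_iff']; simp [Finsupp.single_apply]; omega),
      if_neg (by rw [eq_comm, fin2_ext_iff']; simp [Finsupp.single_apply]; omega),
      if_neg (by rw [eq_comm, fin2_ext_iff']; simp [Finsupp.single_apply]; omega)]
    ring

private lemma quad_factor' (p q a b c : ℝ) (hpq : ¬(p = 0 ∧ q = 0))
    (hv : a*q^2 - b*p*q + c*p^2 = 0) :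
    ∃ α β : ℝ, (C a * X 0^2 + C b * (X 0 * X 1) + C c * X 1^2 : MvPolynomial (Fin 2) ℝ)
      = (C p * X 0 + C q * X 1) * (C α * X 0 + C β * X 1) := by
  have expand : ∀ α β : ℝ, (C p * X 0 + C q * X 1) * (C α * X 0 + C β * X 1)
      = (C (p*α) * X 0^2 + C (p*β + q*α) * (X 0 * X 1)
          + C (q*β) * X 1^2 : MvPolynomial (Fin 2) ℝ) := by
    intro α β; simp only [map_mul, map_add]; ring
  by_cases hp : p = 0
  · have hq : q ≠ 0 := fun h => hpq ⟨hp, h⟩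
    refine ⟨(b*q - p*c)/q^2, c/q, ?_⟩
    rw [expand]
    have ha : a = 0 := by
      have h2 : a * q^2 = 0 := by rw [hp] at hv; linear_combination hv
      exact (mul_eq_zero.mp h2).resolve_right (pow_ne_zero 2 hq)
    rw [show p * ((b*q - p*c)/q^2) = a by rw [hp, ha]; ring]
    rw [show p * (c/q) + q * ((b*q - p*c)/q^2) = b by field_simp; ring]
    rw [show q * (c/q) = c by field_simp]
  · refine ⟨a/p, (b*p - q*a)/p^2, ?_⟩
    rw [expand]
    rw [show p * (a/p) = a by field_simp]
    rw [show p * ((b*p - q*a)/p^2) + q * (a/p) = b by field_simp; ring]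
    rw [show q * ((b*p - q*a)/p^2) = c by field_simp; linear_combination -hv]

/- ## The differential operator -/

noncomputable def DvOp (p q : ℝ) (P : MvPolynomial (Fin 2) ℝ) : MvPolynomial (Fin 2) ℝ :=
  C p * pderiv 0 P + C q * pderiv 1 P

private lemma DvOp_add (p q : ℝ) (P Q : MvPolynomial (Fin 2) ℝ) :
    DvOp p q (P + Q) = DvOp p q P + DvOp p q Q := by
  simp [DvOp]; ring

private lemma DvOp_C_mul (p q c : ℝ) (P : MvPolynomial (Fin 2) ℝ) :
    DvOp p q (C c * P) = C c * DvOp p q P := by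
  simp [DvOp, pderiv_C_mul]; ring

private lemma DvOp_sum (p q : ℝ) {m : ℕ} (P : Fin m → MvPolynomial (Fin 2) ℝ) :
    DvOp p q (∑ i, P i) = ∑ i, DvOp p q (P i) := by
  simp [DvOp, Finset.mul_sum, ← Finset.sum_add_distrib]

private lemma DvOp_linpow (p q a b : ℝ) (n : ℕ) :
    DvOp p q ((C a * X 0 + C b * X 1 : MvPolynomial (Fin 2) ℝ) ^ n)
      = C ((n : ℝ) * (p * a + q * b)) * (C a * X 0 + C b * X 1) ^ (n - 1) := by
  simp only [DvOp, pderiv_pow, map_add, pderiv_C_mul, pderiv_X_self,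
    pderiv_X_of_ne (by decide : (1:Fin 2) ≠ 0), pderiv_X_of_ne (by decide : (0:Fin 2) ≠ 1),
    map_mul]
  push_cast [map_natCast]
  ring

private lemma DvOp_linpow' (p q a b : ℝ) (n k : ℕ) (h : n - 1 = k) (c : ℝ)
    (h2 : (n : ℝ) * (p * a + q * b) = c) :
    DvOp p q ((C a * X 0 + C b * X 1 : MvPolynomial (Fin 2) ℝ) ^ n)
      = C c * (C a * X 0 + C b * X 1) ^ k := by
  rw [DvOp_linpow, h, h2]

noncomputable def LOp (p q r s : ℝ) (P : MvPolynomial (Fin 2) ℝ) : MvPolynomial (Fin 2) ℝ :=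
  DvOp p q (DvOp p q (DvOp r s (DvOp r s P)))

private lemma LOp_add (p q r s : ℝ) (P Q : MvPolynomial (Fin 2) ℝ) :
    LOp p q r s (P + Q) = LOp p q r s P + LOp p q r s Q := by
  simp [LOp, DvOp_add]

private lemma LOp_C_mul (p q r s c : ℝ) (P : MvPolynomial (Fin 2) ℝ) :
    LOp p q r s (C c * P) = C c * LOp p q r s P := by
  simp [LOp, DvOp_C_mul]

private lemma LOp_sum (p q r s : ℝ) {m : ℕ} (P : Fin m → MvPolynomial (Fin 2) ℝ) :
    LOp p q r s (∑ i, P i) = ∑ i, LOp p q r s (P i) := by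
  simp [LOp, DvOp_sum]

private lemma LOp_linpow4 (p q r s a b : ℝ) :
    LOp p q r s ((C a * X 0 + C b * X 1 : MvPolynomial (Fin 2) ℝ) ^ 4)
      = C (24 * ((p * a + q * b))^2 * ((r * a + s * b))^2) := by
  rw [LOp, DvOp_linpow' r s a b 4 3 rfl _ rfl]
  simp only [DvOp_C_mul]
  rw [DvOp_linpow' r s a b 3 2 rfl _ rfl]
  simp only [DvOp_C_mul]
  rw [DvOp_linpow' p q a b 2 1 rfl _ rfl]
  simp only [DvOp_C_mul]
  rw [DvOp_linpow' p q a b 1 0 rfl _ rfl, pow_zero, mul_one]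
  rw [← map_mul, ← map_mul, ← map_mul]
  exact congrArg C (by push_cast; ring)

/- ## The cone argument -/

private lemma parallel' (a b α β : ℝ) (h : ¬(a = 0 ∧ b = 0)) (hpar : b*α - a*β = 0) :
    ∃ t : ℝ, α = t*a ∧ β = t*b := by
  by_cases ha : a = 0
  · have hb : b ≠ 0 := fun h' => h ⟨ha, h'⟩
    have hα : α = 0 := by
      have h2 : b * α = 0 := by rw [ha] at hpar; linear_combination hpar
      exact (mul_eq_zero.mp h2).resolve_left hb
    exact ⟨β/b, by rw [ha, hα]; ring, by field_simp⟩
  · refine ⟨α/a, by field_simp, ?_⟩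
    field_simp
    linear_combination -hpar

private lemma family' (a₁ b₁ a₂ b₂ : ℝ) (h1 : ¬(a₁ = 0 ∧ b₁ = 0)) (h2 : ¬(a₂ = 0 ∧ b₂ = 0))
    {m : ℕ} (α β : Fin m → ℝ)
    (hz : ∀ i, (b₁ * α i - a₁ * β i) * (b₂ * α i - a₂ * β i) = 0) :
    ∃ d₁ d₂ : ℝ, 0 ≤ d₁ ∧ 0 ≤ d₂ ∧
      ∑ i, (C (α i) * X 0 + C (β i) * X 1 : MvPolynomial (Fin 2) ℝ) ^ 4
        = d₁ • (C a₁ * X 0 + C b₁ * X 1) ^ 4 + d₂ • (C a₂ * X 0 + C b₂ * X 1) ^ 4 := by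
  have key : ∀ i, ∃ e₁ e₂ : ℝ, 0 ≤ e₁ ∧ 0 ≤ e₂ ∧
      (C (α i) * X 0 + C (β i) * X 1 : MvPolynomial (Fin 2) ℝ) ^ 4
        = C e₁ * (C a₁ * X 0 + C b₁ * X 1) ^ 4 + C e₂ * (C a₂ * X 0 + C b₂ * X 1) ^ 4 := by
    intro i
    rcases mul_eq_zero.mp (hz i) with h | h
    · obtain ⟨t, ht1, ht2⟩ := parallel' a₁ b₁ (α i) (β i) h1 h
      refine ⟨t^4, 0, by positivity, le_refl _, ?_⟩
      rw [ht1, ht2]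
      simp only [map_mul, map_pow, map_zero]
      ring
    · obtain ⟨t, ht1, ht2⟩ := parallel' a₂ b₂ (α i) (β i) h2 h
      refine ⟨0, t^4, le_refl _, by positivity, ?_⟩
      rw [ht1, ht2]
      simp only [map_mul, map_pow, map_zero]
      ring
  choose e₁ e₂ he₁ he₂ heq using key
  refine ⟨∑ i, e₁ i, ∑ i, e₂ i, Finset.sum_nonneg (fun i _ => he₁ i),
    Finset.sum_nonneg (fun i _ => he₂ i), ?_⟩
  rw [smul_eq_C_mul, smul_eq_C_mul, map_sum, map_sum, Finset.sum_mul, Finset.sum_mul,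
    ← Finset.sum_add_distrib]
  exact Finset.sum_congr rfl (fun i _ => heq i)


/-- For a nonzero linear form `l` and linearly independent linear forms
`l₁, l₂`, the set `l⁴·cone(l₁⁴, l₂⁴)` is a face of `Σ_{2,8}^4`: if `f` and `g` are finite sums
of fourth powers of binary quadratics and `f + g = l⁴·(c₁·l₁⁴ + c₂·l₂⁴)` with `c₁, c₂ ≥ 0`,
then `f` and `g` are of the same form. -/
theorem l4_cone_is_face (l l₁ l₂ : MvPolynomial (Fin 2) ℝ) (hl : l ≠ 0)
    (hl1 : l.IsHomogeneous 1) (hl₁ : l₁.IsHomogeneous 1) (hl₂ : l₂.IsHomogeneous 1)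
    (hind : LinearIndependent ℝ ![l₁, l₂])
    (f g : MvPolynomial (Fin 2) ℝ)
    (hf : ∃ (m : ℕ) (u : Fin m → MvPolynomial (Fin 2) ℝ),
      (∀ i, (u i).IsHomogeneous 2) ∧ f = ∑ i, u i ^ 4)
    (hg : ∃ (m : ℕ) (u : Fin m → MvPolynomial (Fin 2) ℝ),
      (∀ i, (u i).IsHomogeneous 2) ∧ g = ∑ i, u i ^ 4)
    (c₁ c₂ : ℝ) (hc₁ : 0 ≤ c₁) (hc₂ : 0 ≤ c₂)
    (hfg : f + g = l ^ 4 * (c₁ • l₁ ^ 4 + c₂ • l₂ ^ 4)) :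
    (∃ d₁ d₂ : ℝ, 0 ≤ d₁ ∧ 0 ≤ d₂ ∧ f = l ^ 4 * (d₁ • l₁ ^ 4 + d₂ • l₂ ^ 4)) ∧
    (∃ d₁ d₂ : ℝ, 0 ≤ d₁ ∧ 0 ≤ d₂ ∧ g = l ^ 4 * (d₁ • l₁ ^ 4 + d₂ • l₂ ^ 4)) := by
  obtain ⟨um, u, hu, hfu⟩ := hf
  obtain ⟨vm, v, hv, hgv⟩ := hg
  set p := coeff (Finsupp.single 0 1) l with hp_def
  set q := coeff (Finsupp.single 1 1) l with hq_def
  have hlrep : l = C p * X 0 + C q * X 1 := hom1_repr' hl1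
  set a₁ := coeff (Finsupp.single 0 1) l₁ with ha₁_def
  set b₁ := coeff (Finsupp.single 1 1) l₁ with hb₁_def
  have hl₁rep : l₁ = C a₁ * X 0 + C b₁ * X 1 := hom1_repr' hl₁
  set a₂ := coeff (Finsupp.single 0 1) l₂ with ha₂_def
  set b₂ := coeff (Finsupp.single 1 1) l₂ with hb₂_def
  have hl₂rep : l₂ = C a₂ * X 0 + C b₂ * X 1 := hom1_repr' hl₂
  have hpq : ¬(p = 0 ∧ q = 0) := by
    rintro ⟨h1, h2⟩; apply hl; rw [hlrep, h1, h2]; simp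
  have hl₁0 : l₁ ≠ 0 := by simpa using hind.ne_zero 0
  have hl₂0 : l₂ ≠ 0 := by simpa using hind.ne_zero 1
  have ha₁b₁ : ¬(a₁ = 0 ∧ b₁ = 0) := by
    rintro ⟨h1, h2⟩; apply hl₁0; rw [hl₁rep, h1, h2]; simp
  have ha₂b₂ : ¬(a₂ = 0 ∧ b₂ = 0) := by
    rintro ⟨h1, h2⟩; apply hl₂0; rw [hl₂rep, h1, h2]; simp
  -- the zero of l
  set z : Fin 2 → ℝ := ![q, -p] with hz_def
  have hevl : eval z l = 0 := by
    rw [hlrep]; simp [hz_def]; ring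
  have hevfg : eval z f + eval z g = 0 := by
    rw [← map_add, hfg, map_mul, map_pow, hevl]; ring
  have hevf_eq : eval z f = ∑ i, (eval z (u i))^4 := by rw [hfu, map_sum]; simp
  have hevg_eq : eval z g = ∑ j, (eval z (v j))^4 := by rw [hgv, map_sum]; simp
  have hevf_nn : 0 ≤ eval z f := by
    rw [hevf_eq]; exact Finset.sum_nonneg fun i _ => (by positivity : (0:ℝ) ≤ _)
  have hevg_nn : 0 ≤ eval z g := by
    rw [hevg_eq]; exact Finset.sum_nonneg fun j _ => (by positivity : (0:ℝ) ≤ _)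
  have hevf0 : eval z f = 0 := le_antisymm (by linarith) hevf_nn
  have hevg0 : eval z g = 0 := le_antisymm (by linarith) hevg_nn
  have huz : ∀ i, eval z (u i) = 0 := by
    intro i
    have h0 : ∑ i, (eval z (u i))^4 = 0 := by rw [← hevf_eq, hevf0]
    have := (Finset.sum_eq_zero_iff_of_nonneg
      (fun i _ => by positivity)).mp h0 i (Finset.mem_univ i)
    exact pow_eq_zero_iff (by norm_num) |>.mp this
  have hvz : ∀ j, eval z (v j) = 0 := by
    intro j
    have h0 : ∑ j, (eval z (v j))^4 = 0 := by rw [← hevg_eq, hevg0]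
    have := (Finset.sum_eq_zero_iff_of_nonneg
      (fun j _ => by positivity)).mp h0 j (Finset.mem_univ j)
    exact pow_eq_zero_iff (by norm_num) |>.mp this
  -- factor each quadratic
  have hdecu : ∀ i, ∃ A B : ℝ, u i = l * (C A * X 0 + C B * X 1) := by
    intro i
    have hrep := hom2_repr' (hu i)
    set a := coeff (Finsupp.single 0 2) (u i)
    set b := coeff (Finsupp.single 0 1 + Finsupp.single 1 1) (u i)
    set c := coeff (Finsupp.single 1 2) (u i)
    have hval : a*q^2 - b*p*q + c*p^2 = 0 := by
      have h0 := huz i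
      rw [hrep] at h0
      simp [hz_def] at h0
      linear_combination h0
    obtain ⟨A, B, hAB⟩ := quad_factor' p q a b c hpq hval
    exact ⟨A, B, by rw [hrep, hAB, ← hlrep]⟩
  have hdecv : ∀ j, ∃ A B : ℝ, v j = l * (C A * X 0 + C B * X 1) := by
    intro j
    have hrep := hom2_repr' (hv j)
    set a := coeff (Finsupp.single 0 2) (v j)
    set b := coeff (Finsupp.single 0 1 + Finsupp.single 1 1) (v j)
    set c := coeff (Finsupp.single 1 2) (v j)
    have hval : a*q^2 - b*p*q + c*p^2 = 0 := by
      have h0 := hvz j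
      rw [hrep] at h0
      simp [hz_def] at h0
      linear_combination h0
    obtain ⟨A, B, hAB⟩ := quad_factor' p q a b c hpq hval
    exact ⟨A, B, by rw [hrep, hAB, ← hlrep]⟩
  choose A B hAB using hdecu
  choose A' B' hAB' using hdecv
  have hf4 : f = l^4 * ∑ i, (C (A i) * X 0 + C (B i) * X 1 : MvPolynomial (Fin 2) ℝ)^4 := by
    rw [hfu, Finset.mul_sum]
    exact Finset.sum_congr rfl fun i _ => by rw [hAB i, mul_pow]
  have hg4 : g = l^4 * ∑ j, (C (A' j) * X 0 + C (B' j) * X 1 : MvPolynomial (Fin 2) ℝ)^4 := by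
    rw [hgv, Finset.mul_sum]
    exact Finset.sum_congr rfl fun j _ => by rw [hAB' j, mul_pow]
  -- cancel l^4
  have hquartic : (∑ i, (C (A i) * X 0 + C (B i) * X 1 : MvPolynomial (Fin 2) ℝ)^4)
      + (∑ j, (C (A' j) * X 0 + C (B' j) * X 1 : MvPolynomial (Fin 2) ℝ)^4)
      = c₁ • l₁ ^ 4 + c₂ • l₂ ^ 4 := by
    apply mul_left_cancel₀ (pow_ne_zero 4 hl)
    rw [mul_add, ← hf4, ← hg4]
    exact hfg
  -- apply the linear functional LOp
  have hLop := congrArg (LOp b₁ (-a₁) b₂ (-a₂)) hquartic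
  rw [LOp_add, LOp_sum, LOp_sum, smul_eq_C_mul, smul_eq_C_mul, LOp_add,
    LOp_C_mul, LOp_C_mul, hl₁rep, hl₂rep, LOp_linpow4, LOp_linpow4] at hLop
  simp only [LOp_linpow4, ← map_sum, ← map_mul, ← map_add] at hLop
  have hreal := C_injective (Fin 2) ℝ hLop
  have hzero1 : (b₁ * a₁ + -a₁ * b₁) = 0 := by ring
  rw [hzero1] at hreal
  have hzero2 : (b₂ * a₂ + -a₂ * b₂) = 0 := by ring
  rw [hzero2] at hreal
  have hreal' : (∑ i, 24 * (b₁ * A i + -a₁ * B i)^2 * (b₂ * A i + -a₂ * B i)^2)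
      + (∑ j, 24 * (b₁ * A' j + -a₁ * B' j)^2 * (b₂ * A' j + -a₂ * B' j)^2) = 0 := by
    rw [hreal]; ring
  have hnn1 : 0 ≤ ∑ i, 24 * (b₁ * A i + -a₁ * B i)^2 * (b₂ * A i + -a₂ * B i)^2 :=
    Finset.sum_nonneg fun i _ => by positivity
  have hnn2 : 0 ≤ ∑ j, 24 * (b₁ * A' j + -a₁ * B' j)^2 * (b₂ * A' j + -a₂ * B' j)^2 :=
    Finset.sum_nonneg fun j _ => by positivity
  have hs1 : ∑ i, 24 * (b₁ * A i + -a₁ * B i)^2 * (b₂ * A i + -a₂ * B i)^2 = 0 := by linarith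
  have hs2 : ∑ j, 24 * (b₁ * A' j + -a₁ * B' j)^2 * (b₂ * A' j + -a₂ * B' j)^2 = 0 := by linarith
  have hzu : ∀ i, (b₁ * A i - a₁ * B i) * (b₂ * A i - a₂ * B i) = 0 := by
    intro i
    have h0 := (Finset.sum_eq_zero_iff_of_nonneg (fun i _ =>
      (by positivity : (0:ℝ) ≤ 24 * (b₁ * A i + -a₁ * B i)^2 * (b₂ * A i + -a₂ * B i)^2))).mp
      hs1 i (Finset.mem_univ i)
    have h1 : ((b₁ * A i - a₁ * B i) * (b₂ * A i - a₂ * B i))^2 = 0 := by linear_combination h0 / 24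
    exact pow_eq_zero_iff (by norm_num) |>.mp h1
  have hzv : ∀ j, (b₁ * A' j - a₁ * B' j) * (b₂ * A' j - a₂ * B' j) = 0 := by
    intro j
    have h0 := (Finset.sum_eq_zero_iff_of_nonneg (fun j _ =>
      (by positivity : (0:ℝ) ≤ 24 * (b₁ * A' j + -a₁ * B' j)^2 * (b₂ * A' j + -a₂ * B' j)^2))).mp
      hs2 j (Finset.mem_univ j)
    have h1 : ((b₁ * A' j - a₁ * B' j) * (b₂ * A' j - a₂ * B' j))^2 = 0 := by
      linear_combination h0 / 24
    exact pow_eq_zero_iff (by norm_num) |>.mp h1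
  constructor
  · obtain ⟨d₁, d₂, hd₁, hd₂, hsum⟩ := family' a₁ b₁ a₂ b₂ ha₁b₁ ha₂b₂ A B hzu
    exact ⟨d₁, d₂, hd₁, hd₂, by rw [hf4, hsum, ← hl₁rep, ← hl₂rep]⟩
  · obtain ⟨d₁, d₂, hd₁, hd₂, hsum⟩ := family' a₁ b₁ a₂ b₂ ha₁b₁ ha₂b₂ A' B' hzv
    exact ⟨d₁, d₂, hd₁, hd₂, by rw [hg4, hsum, ← hl₁rep, ← hl₂rep]⟩
end

section
/- Let l ∈ ℝ[x,y]_1 be a nonzero linear form. Then the set l⁴·Σ_{2,4}^4 = {l⁴·h : h a binary quartic that is a finite sum of fourth powers of linear forms} is a face of the cone Σ_{2,8}^4: whenever f and g are binary octics, each a finite sum of fourth powers of binary quadratic forms, and f + g = l⁴·h for some h ∈ Σ_{2,4}^4, then there exist h_1, h_2 ∈ Σ_{2,4}^4 with f = l⁴·h_1 and g = l⁴·h_2. -/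
open MvPolynomial

private lemma fin2_degree (m : Fin 2 →₀ ℕ) : m.degree = m 0 + m 1 := by
  classical
  rw [Finsupp.degree_apply, Finset.sum_subset (Finset.subset_univ m.support)]
  · exact Fin.sum_univ_two m
  · intro i _ hi
    simpa using (Finsupp.notMem_support_iff.mp hi)

private lemma deg1_cases (m : Fin 2 →₀ ℕ) (h : m 0 + m 1 = 1) :
    m = Finsupp.single 0 1 ∨ m = Finsupp.single 1 1 := by
  rcases Nat.eq_zero_or_pos (m 0) with h0 | h0
  · right
    ext i
    fin_cases i <;> simp [Finsupp.single_apply] <;> omega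
  · left
    ext i
    fin_cases i <;> simp [Finsupp.single_apply] <;> omega

private lemma deg2_cases (m : Fin 2 →₀ ℕ) (h : m 0 + m 1 = 2) :
    m = Finsupp.single 0 2 ∨ m = Finsupp.single 0 1 + Finsupp.single 1 1 ∨
      m = Finsupp.single 1 2 := by
  rcases Nat.lt_trichotomy (m 0) 1 with h0 | h0 | h0
  · right; right
    ext i
    fin_cases i <;> simp [Finsupp.single_apply] <;> omega
  · right; left
    ext i
    fin_cases i <;> simp [Finsupp.single_apply, Finsupp.add_apply] <;> omega
  · left
    ext i
    fin_cases i <;> simp [Finsupp.single_apply] <;> omega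

private lemma homog1_repr (p : MvPolynomial (Fin 2) ℝ) (hp : p.IsHomogeneous 1) :
    ∃ a b : ℝ, p = C a * X 0 + C b * X 1 := by
  classical
  refine ⟨coeff (Finsupp.single 0 1) p, coeff (Finsupp.single 1 1) p, ?_⟩
  ext m
  by_cases hm : m 0 + m 1 = 1
  · rcases deg1_cases m hm with rfl | rfl <;>
      simp [coeff_add, coeff_C_mul, coeff_X', Finsupp.single_eq_single_iff]
  · rw [hp.coeff_eq_zero (by rw [fin2_degree]; exact hm)]
    have h0 : Finsupp.single (0 : Fin 2) 1 ≠ m := by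
      rintro rfl; simp [Finsupp.single_apply] at hm
    have h1 : Finsupp.single (1 : Fin 2) 1 ≠ m := by
      rintro rfl; simp [Finsupp.single_apply] at hm
    simp [coeff_add, coeff_C_mul, coeff_X', h0, h1]

private lemma homog2_repr (p : MvPolynomial (Fin 2) ℝ) (hp : p.IsHomogeneous 2) :
    ∃ c d e : ℝ, p = C c * X 0 ^ 2 + C d * (X 0 * X 1) + C e * X 1 ^ 2 := by
  classical
  set A : Fin 2 →₀ ℕ := Finsupp.single 0 2 with hA
  set B : Fin 2 →₀ ℕ := Finsupp.single 0 1 + Finsupp.single 1 1 with hB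
  set D : Fin 2 →₀ ℕ := Finsupp.single 1 2 with hD
  have hXX : (X 0 * X 1 : MvPolynomial (Fin 2) ℝ) = monomial B 1 := by
    rw [hB, X, X, monomial_mul, one_mul]
  have hX0 : (X 0 ^ 2 : MvPolynomial (Fin 2) ℝ) = monomial A 1 := X_pow_eq_monomial
  have hX1 : (X 1 ^ 2 : MvPolynomial (Fin 2) ℝ) = monomial D 1 := X_pow_eq_monomial
  have hAB : A ≠ B := by
    intro h'; have := DFunLike.congr_fun h' 0
    simp [hA, hB, Finsupp.single_apply] at this
  have hAD : A ≠ D := by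
    intro h'; have := DFunLike.congr_fun h' 0
    simp [hA, hD, Finsupp.single_apply] at this
  have hBD : B ≠ D := by
    intro h'; have := DFunLike.congr_fun h' 0
    simp [hB, hD, Finsupp.single_apply] at this
  refine ⟨coeff A p, coeff B p, coeff D p, ?_⟩
  ext m
  rw [hXX, hX0, hX1]
  by_cases hm : m 0 + m 1 = 2
  · rcases deg2_cases m hm with rfl | rfl | rfl <;>
      simp [coeff_add, coeff_C_mul, coeff_monomial, hA.symm ▸ hAB, hAD, hBD, hAB.symm,
        hAD.symm, hBD.symm, hAB, ← hA, ← hB, ← hD]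
  · rw [hp.coeff_eq_zero (by rw [fin2_degree]; exact hm)]
    have h0 : A ≠ m := by
      rintro rfl; simp [hA, Finsupp.single_apply] at hm
    have h1 : B ≠ m := by
      rintro rfl; simp [hB, Finsupp.single_apply] at hm
    have h2 : D ≠ m := by
      rintro rfl; simp [hD, Finsupp.single_apply] at hm
    simp [coeff_add, coeff_C_mul, coeff_monomial, h0, h1, h2]

private lemma quad_factor (a b c d e : ℝ) (hab : a ≠ 0 ∨ b ≠ 0)
    (hv : c * b ^ 2 - d * (a * b) + e * a ^ 2 = 0) :
    ∃ α β : ℝ, c = a * α ∧ d = a * β + b * α ∧ e = b * β := by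
  rcases hab with ha | hb
  · refine ⟨c / a, (d * a - b * c) / a ^ 2, ?_, ?_, ?_⟩
    · field_simp
    · field_simp; ring
    · field_simp; linear_combination hv
  · refine ⟨(d * b - a * e) / b ^ 2, e / b, ?_, ?_, ?_⟩
    · field_simp; linear_combination hv
    · field_simp; ring
    · field_simp

private lemma sum_half (l : MvPolynomial (Fin 2) ℝ) (a b : ℝ)
    (hlab : l = C a * X 0 + C b * X 1) (hab : a ≠ 0 ∨ b ≠ 0)
    {m : ℕ} (u : Fin m → MvPolynomial (Fin 2) ℝ) (hu2 : ∀ i, (u i).IsHomogeneous 2)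
    (hvan : ∀ i, eval ![b, -a] (u i) = 0) :
    ∃ h₁ : MvPolynomial (Fin 2) ℝ,
      (∃ (k : ℕ) (w : Fin k → MvPolynomial (Fin 2) ℝ),
        (∀ i, (w i).IsHomogeneous 1) ∧ h₁ = ∑ i, w i ^ 4) ∧
      (∑ i, u i ^ 4) = l ^ 4 * h₁ := by
  have key : ∀ i, ∃ w : MvPolynomial (Fin 2) ℝ, w.IsHomogeneous 1 ∧ u i = l * w := by
    intro i
    obtain ⟨c, d, e, hce⟩ := homog2_repr (u i) (hu2 i)
    have hv0 : c * b ^ 2 - d * (a * b) + e * a ^ 2 = 0 := by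
      have h' := hvan i
      rw [hce] at h'
      simp only [eval_add, eval_mul, eval_pow, eval_C, eval_X, Matrix.cons_val_zero,
        Matrix.cons_val_one, Matrix.head_cons] at h'
      linear_combination h'
    obtain ⟨α, β, h1, h2, h3⟩ := quad_factor a b c d e hab hv0
    refine ⟨C α * X 0 + C β * X 1, ?_, ?_⟩
    · have : ((0 : ℕ) + 1 : ℕ) = 1 := rfl
      exact ((isHomogeneous_C _ _).mul (isHomogeneous_X _ _)).add
        ((isHomogeneous_C _ _).mul (isHomogeneous_X _ _))
    · rw [hce, hlab, h1, h2, h3]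
      simp only [map_mul, map_add]
      ring
  choose w hw1 hw2 using key
  refine ⟨∑ i, w i ^ 4, ⟨m, w, hw1, rfl⟩, ?_⟩
  rw [Finset.mul_sum]
  exact Finset.sum_congr rfl fun i _ => by rw [hw2 i, mul_pow]

/-- For a nonzero linear form `l`, the set `l⁴·Σ_{2,4}^4` is a face of
`Σ_{2,8}^4`: if `f` and `g` are finite sums of fourth powers of binary quadratic forms and
`f + g = l⁴·h` with `h` a finite sum of fourth powers of linear forms, then `f = l⁴·h₁` and
`g = l⁴·h₂` with `h₁, h₂` finite sums of fourth powers of linear forms. -/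
theorem l4_sigma24_is_face (l : MvPolynomial (Fin 2) ℝ) (hl : l ≠ 0)
    (hl1 : l.IsHomogeneous 1)
    (f g : MvPolynomial (Fin 2) ℝ)
    (hf : ∃ (m : ℕ) (u : Fin m → MvPolynomial (Fin 2) ℝ),
      (∀ i, (u i).IsHomogeneous 2) ∧ f = ∑ i, u i ^ 4)
    (hg : ∃ (m : ℕ) (u : Fin m → MvPolynomial (Fin 2) ℝ),
      (∀ i, (u i).IsHomogeneous 2) ∧ g = ∑ i, u i ^ 4)
    (h : MvPolynomial (Fin 2) ℝ)
    (hh : ∃ (m : ℕ) (u : Fin m → MvPolynomial (Fin 2) ℝ),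
      (∀ i, (u i).IsHomogeneous 1) ∧ h = ∑ i, u i ^ 4)
    (hfg : f + g = l ^ 4 * h) :
    (∃ h₁ : MvPolynomial (Fin 2) ℝ,
      (∃ (m : ℕ) (u : Fin m → MvPolynomial (Fin 2) ℝ),
        (∀ i, (u i).IsHomogeneous 1) ∧ h₁ = ∑ i, u i ^ 4) ∧ f = l ^ 4 * h₁) ∧
    (∃ h₂ : MvPolynomial (Fin 2) ℝ,
      (∃ (m : ℕ) (u : Fin m → MvPolynomial (Fin 2) ℝ),
        (∀ i, (u i).IsHomogeneous 1) ∧ h₂ = ∑ i, u i ^ 4) ∧ g = l ^ 4 * h₂) := by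
  obtain ⟨a, b, hlab⟩ := homog1_repr l hl1
  have hab : a ≠ 0 ∨ b ≠ 0 := by
    by_contra h'
    push_neg at h'
    exact hl (by rw [hlab, h'.1, h'.2]; simp)
  have hPl : eval ![b, -a] l = 0 := by
    rw [hlab]
    simp only [eval_add, eval_mul, eval_C, eval_X, Matrix.cons_val_zero,
      Matrix.cons_val_one, Matrix.head_cons]
    ring
  obtain ⟨m, u, hu2, hfe⟩ := hf
  obtain ⟨n, v, hv2, hge⟩ := hg
  have hsum0 : (∑ i, (eval ![b, -a] (u i)) ^ 4) + (∑ j, (eval ![b, -a] (v j)) ^ 4) = 0 := by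
    have h' := congrArg (eval ![b, -a]) hfg
    rw [hfe, hge] at h'
    simp only [map_add, map_sum, map_pow, map_mul, hPl] at h'
    simpa using h'
  have hnn1 : ∀ i ∈ Finset.univ, (0 : ℝ) ≤ (eval ![b, -a] (u i)) ^ 4 := fun i _ => by positivity
  have hnn2 : ∀ j ∈ Finset.univ, (0 : ℝ) ≤ (eval ![b, -a] (v j)) ^ 4 := fun j _ => by positivity
  have hz := (add_eq_zero_iff_of_nonneg (Finset.sum_nonneg hnn1)
    (Finset.sum_nonneg hnn2)).mp hsum0
  have hvanU : ∀ i, eval ![b, -a] (u i) = 0 := by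
    intro i
    have := (Finset.sum_eq_zero_iff_of_nonneg hnn1).mp hz.1 i (Finset.mem_univ i)
    exact pow_eq_zero_iff (by norm_num) |>.mp this
  have hvanV : ∀ j, eval ![b, -a] (v j) = 0 := by
    intro j
    have := (Finset.sum_eq_zero_iff_of_nonneg hnn2).mp hz.2 j (Finset.mem_univ j)
    exact pow_eq_zero_iff (by norm_num) |>.mp this
  obtain ⟨h₁, hh₁, hfeq⟩ := sum_half l a b hlab hab u hu2 hvanU
  obtain ⟨h₂, hh₂, hgeq⟩ := sum_half l a b hlab hab v hv2 hvanV
  exact ⟨⟨h₁, hh₁, by rw [hfe, hfeq]⟩, ⟨h₂, hh₂, by rw [hge, hgeq]⟩⟩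
end
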